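/- arXiv:2405.06235 — 8 statements merged into one kernel-verified Lean document; each statement's English description precedes it below -/
import Mathlib

section
/- Let δ0 > 0, δ > 0, λ > 0 and define φ(x) = ((δ0 + 2δ)·x² + (1+λ)·δ0·δ·x) / (2x² + ((1+2λ)·δ0 + 2λ·δ)·x + λ·(1+λ)·δ0·δ). Then φ is differentiable on (0, ∞) and its derivative satisfies φ'(x) > 0 for every x > 0; in particular φ is strictly increasing on (0, ∞). -/
/-- The reinsurer's best-response function with insurer risk aversion `δ0`,
reinsurer risk aversion `δ`, and competitor's competition degree `lam`. -/
noncomputable def phi (δ0 δ lam x : ℝ) : ℝ :=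
  ((δ0 + 2 * δ) * x^2 + (1 + lam) * δ0 * δ * x) /
    (2 * x^2 + ((1 + 2 * lam) * δ0 + 2 * lam * δ) * x + lam * (1 + lam) * δ0 * δ)

theorem stmt_3 (δ0 δ lam : ℝ) (hδ0 : 0 < δ0) (hδ : 0 < δ) (hlam : 0 < lam) :
    (∀ x : ℝ, 0 < x →
      DifferentiableAt ℝ (phi δ0 δ lam) x ∧ 0 < deriv (phi δ0 δ lam) x) ∧
    StrictMonoOn (phi δ0 δ lam) (Set.Ioi 0) := by
  have key : ∀ x : ℝ, 0 < x →
      DifferentiableAt ℝ (phi δ0 δ lam) x ∧ 0 < deriv (phi δ0 δ lam) x := by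
    intro x hx
    have hDpos : 0 < 2 * x^2 + ((1 + 2 * lam) * δ0 + 2 * lam * δ) * x
        + lam * (1 + lam) * δ0 * δ := by positivity
    have hN : HasDerivAt (fun y : ℝ => (δ0 + 2 * δ) * y^2 + (1 + lam) * δ0 * δ * y)
        ((δ0 + 2 * δ) * (2 * x) + (1 + lam) * δ0 * δ) x := by
      have h1 := (hasDerivAt_pow 2 x).const_mul (δ0 + 2 * δ)
      have h2 := (hasDerivAt_id x).const_mul ((1 + lam) * δ0 * δ)
      have := h1.add h2
      simpa [Pi.add_def, mul_comm, mul_assoc, mul_left_comm] using this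
    have hDd : HasDerivAt (fun y : ℝ => 2 * y^2 + ((1 + 2 * lam) * δ0 + 2 * lam * δ) * y
        + lam * (1 + lam) * δ0 * δ)
        (2 * (2 * x) + ((1 + 2 * lam) * δ0 + 2 * lam * δ)) x := by
      have h1 := (hasDerivAt_pow 2 x).const_mul (2 : ℝ)
      have h2 := (hasDerivAt_id x).const_mul ((1 + 2 * lam) * δ0 + 2 * lam * δ)
      have := (h1.add h2).add_const (lam * (1 + lam) * δ0 * δ)
      simpa [mul_comm, mul_assoc, mul_left_comm] using this
    have hphi : HasDerivAt (phi δ0 δ lam)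
        ((((δ0 + 2 * δ) * (2 * x) + (1 + lam) * δ0 * δ) *
            (2 * x^2 + ((1 + 2 * lam) * δ0 + 2 * lam * δ) * x + lam * (1 + lam) * δ0 * δ)
          - ((δ0 + 2 * δ) * x^2 + (1 + lam) * δ0 * δ * x) *
            (2 * (2 * x) + ((1 + 2 * lam) * δ0 + 2 * lam * δ))) /
          (2 * x^2 + ((1 + 2 * lam) * δ0 + 2 * lam * δ) * x + lam * (1 + lam) * δ0 * δ)^2) x := by
      have := hN.div hDd (ne_of_gt hDpos)
      exact this
    refine ⟨hphi.differentiableAt, ?_⟩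
    rw [hphi.deriv]
    have hnum : (((δ0 + 2 * δ) * (2 * x) + (1 + lam) * δ0 * δ) *
            (2 * x^2 + ((1 + 2 * lam) * δ0 + 2 * lam * δ) * x + lam * (1 + lam) * δ0 * δ)
          - ((δ0 + 2 * δ) * x^2 + (1 + lam) * δ0 * δ * x) *
            (2 * (2 * x) + ((1 + 2 * lam) * δ0 + 2 * lam * δ)))
        = ((1 + 2 * lam) * δ0^2 + 4 * lam * δ0 * δ + 4 * lam * δ^2) * x^2
          + 2 * (δ0 + 2 * δ) * (lam * (1 + lam) * δ0 * δ) * x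
          + ((1 + lam) * δ0 * δ) * (lam * (1 + lam) * δ0 * δ) := by ring
    rw [hnum]
    positivity
  refine ⟨key, ?_⟩
  have hint : interior (Set.Ioi (0:ℝ)) = Set.Ioi 0 := interior_Ioi
  refine strictMonoOn_of_deriv_pos (convex_Ioi 0) ?_ ?_
  · intro x hx
    exact ((key x hx).1).continuousAt.continuousWithinAt
  · intro x hx
    rw [hint] at hx
    exact (key x hx).2
end

section
/- Let δ0 > 0, δ > 0, λ > 0 and define φ(x) = ((δ0 + 2δ)·x² + (1+λ)·δ0·δ·x) / (2x² + ((1+2λ)·δ0 + 2λ·δ)·x + λ·(1+λ)·δ0·δ). Then φ restricted to (0, ∞) is a strictly increasing bijection from (0, ∞) onto the open interval (0, (δ0 + 2δ)/2); in particular φ admits a strictly increasing inverse function defined on (0, (δ0 + 2δ)/2). -/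
private lemma Dpos (δ0 δ lam x : ℝ) (hδ0 : 0 < δ0) (hδ : 0 < δ) (hlam : 0 < lam)
    (hx : 0 < x) :
    0 < 2 * x^2 + ((1 + 2 * lam) * δ0 + 2 * lam * δ) * x + lam * (1 + lam) * δ0 * δ := by
  positivity

private lemma phi_mono (δ0 δ lam : ℝ) (hδ0 : 0 < δ0) (hδ : 0 < δ) (hlam : 0 < lam) :
    StrictMonoOn (phi δ0 δ lam) (Set.Ioi 0) := by
  intro x hx y hy hxy
  simp only [Set.mem_Ioi] at hx hy
  have Dx := Dpos δ0 δ lam x hδ0 hδ hlam hx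
  have Dy := Dpos δ0 δ lam y hδ0 hδ hlam hy
  unfold phi
  rw [div_lt_div_iff₀ Dx Dy]
  have key : ((δ0 + 2 * δ) * y^2 + (1 + lam) * δ0 * δ * y) *
        (2 * x^2 + ((1 + 2 * lam) * δ0 + 2 * lam * δ) * x + lam * (1 + lam) * δ0 * δ) -
      ((δ0 + 2 * δ) * x^2 + (1 + lam) * δ0 * δ * x) *
        (2 * y^2 + ((1 + 2 * lam) * δ0 + 2 * lam * δ) * y + lam * (1 + lam) * δ0 * δ) =
      (y - x) * ((δ0^2 * (1 + 2 * lam) + 4 * lam * δ0 * δ + 4 * lam * δ^2) * (x * y) +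
        (δ0 + 2 * δ) * (lam * (1 + lam) * δ0 * δ) * (x + y) +
        ((1 + lam) * δ0 * δ) * (lam * (1 + lam) * δ0 * δ)) := by ring
  have h1 : 0 < y - x := sub_pos.2 hxy
  have h2 : 0 < (δ0^2 * (1 + 2 * lam) + 4 * lam * δ0 * δ + 4 * lam * δ^2) * (x * y) +
      (δ0 + 2 * δ) * (lam * (1 + lam) * δ0 * δ) * (x + y) +
      ((1 + lam) * δ0 * δ) * (lam * (1 + lam) * δ0 * δ) := by positivity
  nlinarith [mul_pos h1 h2]

private lemma phi_mapsTo (δ0 δ lam : ℝ) (hδ0 : 0 < δ0) (hδ : 0 < δ) (hlam : 0 < lam) :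
    Set.MapsTo (phi δ0 δ lam) (Set.Ioi 0) (Set.Ioo 0 ((δ0 + 2 * δ) / 2)) := by
  intro x hx
  simp only [Set.mem_Ioi] at hx
  have Dx := Dpos δ0 δ lam x hδ0 hδ hlam hx
  constructor
  · unfold phi
    apply div_pos _ Dx
    positivity
  · unfold phi
    rw [div_lt_div_iff₀ Dx (by norm_num : (0:ℝ) < 2)]
    have h : 0 < x * (δ0^2 * (1 + 2 * lam) + 4 * lam * δ0 * δ + 4 * lam * δ^2) +
        (δ0 + 2 * δ) * (lam * (1 + lam) * δ0 * δ) := by positivity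
    nlinarith [h]

private lemma phi_surj (δ0 δ lam : ℝ) (hδ0 : 0 < δ0) (hδ : 0 < δ) (hlam : 0 < lam) :
    Set.SurjOn (phi δ0 δ lam) (Set.Ioi 0) (Set.Ioo 0 ((δ0 + 2 * δ) / 2)) := by
  intro y hy
  obtain ⟨hy0, hy1⟩ := hy
  set a := δ0 + 2 * δ with ha
  set b := (1 + lam) * δ0 * δ with hb
  set c := (1 + 2 * lam) * δ0 + 2 * lam * δ with hc
  set d := lam * (1 + lam) * δ0 * δ with hd
  have hA : 0 < a - 2 * y := by
    have : y < a / 2 := hy1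
    linarith
  have hdpos : 0 < d := by rw [hd]; positivity
  have hΔ : (b - c * y)^2 < (b - c * y)^2 + 4 * (a - 2 * y) * (d * y) := by
    nlinarith [mul_pos (mul_pos hA hdpos) hy0]
  have hΔ0 : 0 ≤ (b - c * y)^2 + 4 * (a - 2 * y) * (d * y) := by positivity
  set s := Real.sqrt ((b - c * y)^2 + 4 * (a - 2 * y) * (d * y)) with hs
  have hs2 : s^2 = (b - c * y)^2 + 4 * (a - 2 * y) * (d * y) := Real.sq_sqrt hΔ0
  have hsgt : b - c * y < s := by
    have habs : |b - c * y| < s := by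
      rw [hs]
      have := Real.sqrt_lt_sqrt (sq_nonneg (b - c * y)) hΔ
      rwa [Real.sqrt_sq_eq_abs] at this
    calc b - c * y ≤ |b - c * y| := le_abs_self _
      _ < s := habs
  set x := (c * y - b + s) / (2 * (a - 2 * y)) with hx
  have hxpos : 0 < x := by
    apply div_pos _ (by linarith)
    linarith
  refine ⟨x, hxpos, ?_⟩
  have Dx := Dpos δ0 δ lam x hδ0 hδ hlam hxpos
  have hroot : (a - 2 * y) * x^2 + (b - c * y) * x - d * y = 0 := by
    rw [hx]
    have hne : (2 * (a - 2 * y)) ≠ 0 := by positivity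
    field_simp
    nlinarith [hs2]
  unfold phi
  rw [div_eq_iff (ne_of_gt Dx)]
  rw [← ha, ← hb, ← hc, ← hd]
  nlinarith [hroot]

theorem stmt_6 (δ0 δ lam : ℝ) (hδ0 : 0 < δ0) (hδ : 0 < δ) (hlam : 0 < lam) :
    StrictMonoOn (phi δ0 δ lam) (Set.Ioi 0) ∧
    Set.BijOn (phi δ0 δ lam) (Set.Ioi 0) (Set.Ioo 0 ((δ0 + 2 * δ) / 2)) ∧
    ∃ ψ : ℝ → ℝ, StrictMonoOn ψ (Set.Ioo 0 ((δ0 + 2 * δ) / 2)) ∧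
      (∀ x ∈ Set.Ioi (0 : ℝ), ψ (phi δ0 δ lam x) = x) ∧
      (∀ y ∈ Set.Ioo (0 : ℝ) ((δ0 + 2 * δ) / 2), phi δ0 δ lam (ψ y) = y) := by
  have hmono := phi_mono δ0 δ lam hδ0 hδ hlam
  have hmaps := phi_mapsTo δ0 δ lam hδ0 hδ hlam
  have hsurj := phi_surj δ0 δ lam hδ0 hδ hlam
  have hinj : Set.InjOn (phi δ0 δ lam) (Set.Ioi 0) := hmono.injOn
  have hbij : Set.BijOn (phi δ0 δ lam) (Set.Ioi 0) (Set.Ioo 0 ((δ0 + 2 * δ) / 2)) :=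
    ⟨hmaps, hinj, hsurj⟩
  refine ⟨hmono, hbij, Function.invFunOn (phi δ0 δ lam) (Set.Ioi 0), ?_, ?_, ?_⟩
  · -- strict mono of inverse
    intro y1 hy1 y2 hy2 h12
    have hx1 : Function.invFunOn (phi δ0 δ lam) (Set.Ioi 0) y1 ∈ Set.Ioi (0:ℝ) ∧
        phi δ0 δ lam (Function.invFunOn (phi δ0 δ lam) (Set.Ioi 0) y1) = y1 := by
      obtain ⟨x, hx, hfx⟩ := hsurj hy1
      exact ⟨Function.invFunOn_mem ⟨x, hx, hfx⟩, Function.invFunOn_eq ⟨x, hx, hfx⟩⟩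
    have hx2 : Function.invFunOn (phi δ0 δ lam) (Set.Ioi 0) y2 ∈ Set.Ioi (0:ℝ) ∧
        phi δ0 δ lam (Function.invFunOn (phi δ0 δ lam) (Set.Ioi 0) y2) = y2 := by
      obtain ⟨x, hx, hfx⟩ := hsurj hy2
      exact ⟨Function.invFunOn_mem ⟨x, hx, hfx⟩, Function.invFunOn_eq ⟨x, hx, hfx⟩⟩
    by_contra hle
    push_neg at hle
    rcases lt_or_eq_of_le hle with hlt | heq
    · have := hmono hx2.1 hx1.1 hlt
      rw [hx1.2, hx2.2] at this
      linarith
    · rw [heq, hx1.2] at hx2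
      linarith [hx2.2]
  · intro x hx
    exact hinj.leftInvOn_invFunOn hx
  · intro y hy
    obtain ⟨x, hx, hfx⟩ := hsurj hy
    exact Function.invFunOn_eq ⟨x, hx, hfx⟩
end

section
/- Let δ0, δ1, δ2 > 0 and λ1, λ2 > 0 with λ1·λ2 < 1. Then there exists exactly one pair (θ1, θ2) with θ1 > 0 and θ2 > 0 such that θ1 = φ1(θ2) and θ2 = φ2(θ1); that is, the bivariate mapping (θ1, θ2) ↦ (φ1(θ2), φ2(θ1)) admits a unique fixed point in (0, ∞) × (0, ∞). -/
section helpers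
variable {δ0 δ lam : ℝ} (hδ0 : 0 < δ0) (hδ : 0 < δ) (hlam : 0 < lam)
include hδ0 hδ hlam

lemma den_pos {x : ℝ} (hx : 0 < x) :
    0 < 2 * x^2 + ((1 + 2 * lam) * δ0 + 2 * lam * δ) * x + lam * (1 + lam) * δ0 * δ := by
  positivity

lemma phi_pos {x : ℝ} (hx : 0 < x) : 0 < phi δ0 δ lam x := by
  unfold phi
  exact div_pos (by positivity) (den_pos hδ0 hδ hlam hx)

lemma phi_mono_s7 {x y : ℝ} (hx : 0 < x) (hxy : x < y) :
    phi δ0 δ lam x < phi δ0 δ lam y := by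
  unfold phi
  rw [div_lt_div_iff₀ (den_pos hδ0 hδ hlam hx) (den_pos hδ0 hδ hlam (hx.trans hxy))]
  have hy : 0 < y := hx.trans hxy
  have hM : 0 < ((1 + 2*lam)*δ0^2 + 4*lam*δ0*δ + 4*lam*δ^2) * (x*y)
      + (δ0 + 2*δ) * (lam*(1+lam)*δ0*δ) * (x+y)
      + ((1+lam)*δ0*δ) * (lam*(1+lam)*δ0*δ) := by positivity
  nlinarith [mul_pos (sub_pos.mpr hxy) hM]

lemma phi_ratio {x y : ℝ} (hx : 0 < x) (hxy : x < y) :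
    phi δ0 δ lam y * x < phi δ0 δ lam x * y := by
  have hy : 0 < y := hx.trans hxy
  unfold phi
  rw [div_mul_eq_mul_div, div_mul_eq_mul_div,
    div_lt_div_iff₀ (den_pos hδ0 hδ hlam hy) (den_pos hδ0 hδ hlam hx)]
  have hM : 0 < 2*(δ0+2*δ)*(x*y) + 2*((1+lam)*δ0*δ)*(x+y) + (1+lam)^2*δ0^2*δ := by
    positivity
  nlinarith [mul_pos (mul_pos (mul_pos hx hy) (sub_pos.mpr hxy)) hM]

lemma phi_lt {x : ℝ} (hx : 0 < x) : phi δ0 δ lam x < (δ0 + 2*δ)/2 := by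
  unfold phi
  rw [div_lt_div_iff₀ (den_pos hδ0 hδ hlam hx) (by norm_num : (0:ℝ) < 2)]
  have hM : 0 < ((1 + 2*lam)*δ0^2 + 4*lam*δ0*δ + 4*lam*δ^2) := by positivity
  nlinarith [mul_pos hx hM, mul_pos (by positivity : (0:ℝ) < δ0+2*δ) (by positivity : (0:ℝ) < lam*(1+lam)*δ0*δ)]

lemma phi_lb {η x : ℝ} (hη : 0 < η) (hx : 0 < x)
    (hc : 2*x^2 + ((1 + 2*lam)*δ0 + 2*lam*δ)*x ≤ η * (lam*(1+lam)*δ0*δ)) :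
    x ≤ lam * (1+η) * phi δ0 δ lam x := by
  unfold phi
  rw [← mul_div_assoc, le_div_iff₀ (den_pos hδ0 hδ hlam hx)]
  nlinarith [mul_nonneg hx.le (sub_nonneg.mpr hc),
    mul_pos (mul_pos hlam (by linarith : (0:ℝ) < 1+η))
      (mul_pos (by positivity : (0:ℝ) < δ0 + 2*δ) (mul_pos hx hx))]

lemma phi_ub {x : ℝ} (hx : 0 < x) (hx1 : x ≤ 1) :
    phi δ0 δ lam x * (lam*(1+lam)*δ0*δ) ≤ ((δ0 + 2*δ) + (1+lam)*δ0*δ) * x := by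
  unfold phi
  rw [div_mul_eq_mul_div, div_le_iff₀ (den_pos hδ0 hδ hlam hx)]
  have h1 : 0 ≤ 2*x^2 + ((1 + 2*lam)*δ0 + 2*lam*δ)*x := by positivity
  nlinarith [mul_nonneg (mul_nonneg (by positivity : (0:ℝ) ≤ ((δ0 + 2*δ) + (1+lam)*δ0*δ)) hx.le) h1,
    mul_nonneg (mul_nonneg (by positivity : (0:ℝ) ≤ lam*(1+lam)*δ0*δ*(δ0+2*δ)) hx.le)
      (sub_nonneg.mpr hx1)]

lemma phi_contAt {x : ℝ} (hx : 0 < x) : ContinuousAt (phi δ0 δ lam) x := by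
  unfold phi
  exact ContinuousAt.div (by fun_prop) (by fun_prop) (ne_of_gt (den_pos hδ0 hδ hlam hx))

end helpers

theorem stmt_7 (δ0 δ1 δ2 lam1 lam2 : ℝ) (hδ0 : 0 < δ0) (hδ1 : 0 < δ1) (hδ2 : 0 < δ2)
    (hlam1 : 0 < lam1) (hlam2 : 0 < lam2) (hprod : lam1 * lam2 < 1) :
    ∃! θ : ℝ × ℝ, 0 < θ.1 ∧ 0 < θ.2 ∧
      θ.1 = phi δ0 δ1 lam2 θ.2 ∧ θ.2 = phi δ0 δ2 lam1 θ.1 := by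
  set φa := phi δ0 δ1 lam2 with hφa
  set φb := phi δ0 δ2 lam1 with hφb
  set g : ℝ → ℝ := fun x => φb (φa x) with hg
  -- basic facts
  have hapos : ∀ {x : ℝ}, 0 < x → 0 < φa x := fun hx => phi_pos hδ0 hδ1 hlam2 hx
  have hbpos : ∀ {x : ℝ}, 0 < x → 0 < φb x := fun hx => phi_pos hδ0 hδ2 hlam1 hx
  have hgpos : ∀ {x : ℝ}, 0 < x → 0 < g x := fun hx => hbpos (hapos hx)
  -- ratio of g is strictly decreasing
  have gratio : ∀ u v : ℝ, 0 < u → u < v → g v * u < g u * v := by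
    intro u v hu huv
    have hv : 0 < v := hu.trans huv
    have h1 : φa u < φa v := phi_mono_s7 hδ0 hδ1 hlam2 hu huv
    have hyu : 0 < φa u := hapos hu
    have hyv : 0 < φa v := hapos hv
    have h2 : φb (φa v) * φa u < φb (φa u) * φa v := phi_ratio hδ0 hδ2 hlam1 hyu h1
    have h3 : φa v * u < φa u * v := phi_ratio hδ0 hδ1 hlam2 hu huv
    have h4 := mul_lt_mul'' h2 h3 (mul_pos (hbpos hyv) hyu).le (mul_pos hyv hu).le
    have h5 : (g v * u) * (φa u * φa v) < (g u * v) * (φa u * φa v) := by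
      calc (g v * u) * (φa u * φa v) = (φb (φa v) * φa u) * (φa v * u) := by
            simp only [hg]; ring
        _ < (φb (φa u) * φa v) * (φa u * v) := h4
        _ = (g u * v) * (φa u * φa v) := by simp only [hg]; ring
    exact lt_of_mul_lt_mul_right h5 (mul_pos hyu hyv).le
  -- fixed points of g are unique
  have guniq : ∀ u v : ℝ, 0 < u → 0 < v → g u = u → g v = v → u = v := by
    intro u v hu hv hgu hgv
    rcases lt_trichotomy u v with h | h | h
    · have := gratio u v hu h; rw [hgu, hgv] at this; nlinarith
    · exact h
    · have := gratio v u hv h; rw [hgu, hgv] at this; nlinarith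
  -- existence of a fixed point of g
  -- small point
  set η : ℝ := (1 - lam1*lam2)/3 with hη
  have hηpos : 0 < η := by simp only [hη]; linarith
  have hq : lam1 * lam2 * ((1+η)*(1+η)) < 1 := by
    have hp : 0 < lam1*lam2 := mul_pos hlam1 hlam2
    nlinarith [mul_pos hp (by nlinarith : (0:ℝ) < (lam1*lam2)^2 - 7*(lam1*lam2) + 9),
      sq_nonneg (1 - lam1*lam2)]
  set d1 : ℝ := lam2*(1+lam2)*δ0*δ1 with hd1
  set d2 : ℝ := lam1*(1+lam1)*δ0*δ2 with hd2
  set c1 : ℝ := (1 + 2*lam2)*δ0 + 2*lam2*δ1 with hc1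
  set c2 : ℝ := (1 + 2*lam1)*δ0 + 2*lam1*δ2 with hc2
  set K : ℝ := (δ0 + 2*δ1) + (1+lam2)*δ0*δ1 with hK
  have hd1p : 0 < d1 := by simp only [hd1]; positivity
  have hd2p : 0 < d2 := by simp only [hd2]; positivity
  have hc1p : 0 < c1 := by simp only [hc1]; positivity
  have hc2p : 0 < c2 := by simp only [hc2]; positivity
  have hKp : 0 < K := by simp only [hK]; positivity
  clear_value η d1 d2 c1 c2 K
  set x0 : ℝ := min 1 (min (η*d1/(2+c1)) (min (d1/K) (η*d2*d1/((2+c2)*K)))) with hx0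
  have hx0p : 0 < x0 := by
    simp only [hx0]
    refine lt_min one_pos (lt_min (by positivity) (lt_min (by positivity) (by positivity)))
  clear_value x0
  have hx01 : x0 ≤ 1 := by rw [hx0]; exact min_le_left _ _
  -- lower bound chain at x0
  have hcond1 : 2*x0^2 + c1*x0 ≤ η * d1 := by
    have h1 : x0 ≤ η*d1/(2+c1) := by
      rw [hx0]; exact le_trans (min_le_right _ _) (min_le_left _ _)
    have h2 : x0 * (2+c1) ≤ η*d1 := by
      rw [← le_div_iff₀ (by linarith)]; exact h1
    linarith only [h2, mul_nonneg hx0p.le (sub_nonneg.mpr hx01)]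
  have hlb1 : x0 ≤ lam2 * (1+η) * φa x0 := phi_lb hδ0 hδ1 hlam2 hηpos hx0p (by
    simpa [hc1, hd1] using hcond1)
  set y0 : ℝ := φa x0 with hy0
  clear_value y0
  have hy0p : 0 < y0 := by rw [hy0]; exact hapos hx0p
  have hy0K : y0 * d1 ≤ K * x0 := by
    simpa [hy0, hd1, hK] using phi_ub hδ0 hδ1 hlam2 hx0p hx01
  have hy01 : y0 ≤ 1 := by
    have h1 : x0 ≤ d1/K := by
      rw [hx0]
      exact le_trans (min_le_right _ _) (le_trans (min_le_right _ _) (min_le_left _ _))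
    have h2 : K * x0 ≤ d1 := by
      rw [← le_div_iff₀' hKp]; exact h1
    have h3 : y0 * d1 ≤ 1 * d1 := by linarith only [hy0K.trans h2]
    exact le_of_mul_le_mul_right h3 hd1p
  have hy0small : y0 * (2+c2) ≤ η * d2 := by
    have h1 : x0 ≤ η*d2*d1/((2+c2)*K) := by
      rw [hx0]
      exact le_trans (min_le_right _ _) (le_trans (min_le_right _ _) (min_le_right _ _))
    have h2 : x0 * ((2+c2)*K) ≤ η*d2*d1 := by
      rw [← le_div_iff₀ (mul_pos (by linarith) hKp)]; exact h1
    have h3 := mul_le_mul_of_nonneg_right hy0K (by linarith : (0:ℝ) ≤ 2+c2)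
    have h4 : (y0*(2+c2))*d1 ≤ (η*d2)*d1 := by linarith only [h2, h3]
    exact le_of_mul_le_mul_right h4 hd1p
  have hcond2 : 2*y0^2 + c2*y0 ≤ η * d2 := by
    linarith only [hy0small, mul_nonneg hy0p.le (sub_nonneg.mpr hy01)]
  have hlb2 : y0 ≤ lam1 * (1+η) * φb y0 := phi_lb hδ0 hδ2 hlam1 hηpos hy0p (by
    simpa [hc2, hd2] using hcond2)
  have hgx0 : x0 < g x0 := by
    have hgp : 0 < g x0 := hgpos hx0p
    have h1 : x0 ≤ lam2*(1+η)*(lam1*(1+η)*φb y0) := by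
      calc x0 ≤ lam2 * (1+η) * y0 := hlb1
        _ ≤ lam2*(1+η)*(lam1*(1+η)*φb y0) :=
            mul_le_mul_of_nonneg_left hlb2 (by positivity)
    have h2 : lam2*(1+η)*(lam1*(1+η)*φb y0) = (lam1*lam2*((1+η)*(1+η))) * g x0 := by
      simp only [hg, hy0]; ring
    have h3 : x0 ≤ (lam1*lam2*((1+η)*(1+η))) * g x0 := h2 ▸ h1
    have h4 : (lam1*lam2*((1+η)*(1+η))) * g x0 < 1 * g x0 := mul_lt_mul_of_pos_right hq hgp
    linarith only [h3, h4]
  -- upper bound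
  set M : ℝ := (δ0 + 2*δ2)/2 with hM
  clear_value M
  have hgM : ∀ {x : ℝ}, 0 < x → g x < M := fun hx => by
    rw [hM]; exact phi_lt hδ0 hδ2 hlam1 (hapos hx)
  have hx0M : x0 < M := lt_trans hgx0 (hgM hx0p)
  -- IVT
  set f : ℝ → ℝ := fun x => g x - x with hf
  clear_value f
  have hcont : ContinuousOn f (Set.Icc x0 M) := by
    intro x hx
    have hxp : 0 < x := lt_of_lt_of_le hx0p hx.1
    have hgc : ContinuousAt g x := by
      rw [hg]
      exact (phi_contAt hδ0 hδ2 hlam1 (hapos hxp)).comp (phi_contAt hδ0 hδ1 hlam2 hxp)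
    have : ContinuousAt f x := by
      rw [hf]; exact hgc.sub continuousAt_id
    exact this.continuousWithinAt
  have hmem : (0:ℝ) ∈ Set.Icc (f M) (f x0) := by
    constructor
    · have : g M < M := hgM (lt_trans hx0p hx0M)
      simp only [hf]; linarith
    · simp only [hf]; linarith
  obtain ⟨θ2, hθ2mem, hfθ2⟩ := intermediate_value_Icc' hx0M.le hcont hmem
  have hθ2p : 0 < θ2 := lt_of_lt_of_le hx0p hθ2mem.1
  have hgθ2 : g θ2 = θ2 := by
    have := hfθ2
    simp only [hf] at this
    linarith [sub_eq_zero.mp this]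
  refine ⟨(φa θ2, θ2), ⟨hapos hθ2p, hθ2p, rfl, (hgθ2.symm : θ2 = φb (φa θ2))⟩, ?_⟩
  rintro ⟨u1, u2⟩ ⟨hu1, hu2, he1, he2⟩
  simp only at he1 he2 hu1 hu2
  have hgu2 : g u2 = u2 := by
    simp only [hg]
    rw [← he1, ← he2]
  have h22 : u2 = θ2 := guniq u2 θ2 hu2 hθ2p hgu2 hgθ2
  have h11 : u1 = φa θ2 := by rw [he1, h22]
  simp [Prod.ext_iff, h11, h22]
end

section
/- Let δ0, δ1, δ2 > 0 and λ1, λ2 > 0 with λ1·λ2 ≥ 1. Then there is no pair (θ1, θ2) with θ1 > 0 and θ2 > 0 such that θ1 = φ1(θ2) and θ2 = φ2(θ1); that is, the bivariate mapping (θ1, θ2) ↦ (φ1(θ2), φ2(θ1)) has no fixed point in (0, ∞) × (0, ∞). -/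
theorem stmt_8 (δ0 δ1 δ2 lam1 lam2 : ℝ) (hδ0 : 0 < δ0) (hδ1 : 0 < δ1) (hδ2 : 0 < δ2)
    (hlam1 : 0 < lam1) (hlam2 : 0 < lam2) (hprod : 1 ≤ lam1 * lam2) :
    ¬ ∃ θ : ℝ × ℝ, 0 < θ.1 ∧ 0 < θ.2 ∧
      θ.1 = phi δ0 δ1 lam2 θ.2 ∧ θ.2 = phi δ0 δ2 lam1 θ.1 := by
  have key : ∀ δ lam x : ℝ, 0 < δ → 0 < lam → 0 < x → phi δ0 δ lam x * lam < x := by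
    intro δ lam x hδ hlam hx
    have hD : 0 < 2 * x^2 + ((1 + 2 * lam) * δ0 + 2 * lam * δ) * x + lam * (1 + lam) * δ0 * δ := by
      positivity
    rw [phi, div_mul_eq_mul_div, div_lt_iff₀ hD]
    nlinarith [mul_pos (mul_pos hx hx) hx, mul_pos hδ0 (mul_pos hx hx)]
  rintro ⟨⟨θ1, θ2⟩, h1, h2, e1, e2⟩
  have k1 := key δ1 lam2 θ2 hδ1 hlam2 h2
  have k2 := key δ2 lam1 θ1 hδ2 hlam1 h1
  rw [← e1] at k1
  rw [← e2] at k2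
  nlinarith [mul_pos h1 hlam2]
end

section
/- Fix x > 0, δ0 > 0 and δ > 0, and regard Φ(λ) = ((δ0 + 2δ)·x² + (1+λ)·δ0·δ·x) / (2x² + ((1+2λ)·δ0 + 2λ·δ)·x + λ·(1+λ)·δ0·δ) as a function of the parameter λ > 0. Then Φ is strictly decreasing in λ; equivalently, its derivative satisfies ∂Φ/∂λ = −(2·(δ0² + 2δ0·δ + 2δ²)·x³ + 2·δ0·δ·(δ0 + 2δ)·(1+λ)·x² + δ0²·δ²·(1+λ)²·x)/Q² < 0, where Q = 2x² + ((1+2λ)·δ0 + 2λ·δ)·x + λ·(1+λ)·δ0·δ. -/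
/-- The denominator of `phi`. -/
noncomputable def Qden (δ0 δ lam x : ℝ) : ℝ :=
  2 * x^2 + ((1 + 2 * lam) * δ0 + 2 * lam * δ) * x + lam * (1 + lam) * δ0 * δ

lemma Qden_pos (x δ0 δ lam : ℝ) (hx : 0 < x) (hδ0 : 0 < δ0) (hδ : 0 < δ)
    (hl : 0 < lam) : 0 < Qden δ0 δ lam x := by
  unfold Qden
  nlinarith [mul_pos hx hx, mul_pos hδ0 hx, mul_pos (mul_pos hl hδ0) hx, mul_pos (mul_pos hl hδ) hx, mul_pos (mul_pos hl hl) (mul_pos hδ0 hδ), mul_pos hl (mul_pos hδ0 hδ)]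

lemma phi_hasDerivAt (x δ0 δ lam : ℝ) (hx : 0 < x) (hδ0 : 0 < δ0) (hδ : 0 < δ)
    (hl : 0 < lam) :
    HasDerivAt (fun t => phi δ0 δ t x)
      (-(2 * (δ0^2 + 2 * δ0 * δ + 2 * δ^2) * x^3 +
          2 * δ0 * δ * (δ0 + 2 * δ) * (1 + lam) * x^2 +
          δ0^2 * δ^2 * (1 + lam)^2 * x) / (Qden δ0 δ lam x)^2) lam := by
  have hQ := Qden_pos x δ0 δ lam hx hδ0 hδ hl
  have hN : HasDerivAt (fun t : ℝ => (δ0 + 2 * δ) * x^2 + (1 + t) * δ0 * δ * x)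
      (δ0 * δ * x) lam := by
    have : HasDerivAt (fun t : ℝ => (δ0 + 2 * δ) * x^2 + (1 + t) * δ0 * δ * x)
        (0 + (0 + 1) * δ0 * δ * x) lam := by
      exact ((hasDerivAt_const lam ((δ0 + 2 * δ) * x^2)).add
        ((((hasDerivAt_const lam (1:ℝ)).add (hasDerivAt_id lam)).mul_const δ0).mul_const δ
          |>.mul_const x))
    simpa using this
  have hD : HasDerivAt (fun t : ℝ => 2 * x^2 + ((1 + 2 * t) * δ0 + 2 * t * δ) * x +
        t * (1 + t) * δ0 * δ)
      ((2 * δ0 + 2 * δ) * x + (1 + 2 * lam) * δ0 * δ) lam := by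
    have h1 : HasDerivAt (fun t : ℝ => 2 * x^2 + ((1 + 2 * t) * δ0 + 2 * t * δ) * x)
        ((2 * δ0 + 2 * δ) * x) lam := by
      have : HasDerivAt (fun t : ℝ => 2 * x^2 + ((1 + 2 * t) * δ0 + 2 * t * δ) * x)
          (0 + (((0 + 2 * 1) * δ0) + 2 * 1 * δ) * x) lam := by
        exact (hasDerivAt_const lam (2 * x^2)).add
          (((((hasDerivAt_const lam (1:ℝ)).add ((hasDerivAt_id lam).const_mul 2)).mul_const δ0).add
            (((hasDerivAt_id lam).const_mul 2).mul_const δ)).mul_const x)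
      simpa using this
    have h2 : HasDerivAt (fun t : ℝ => t * (1 + t) * δ0 * δ)
        ((1 + 2 * lam) * δ0 * δ) lam := by
      have : HasDerivAt (fun t : ℝ => t * (1 + t) * δ0 * δ)
          ((1 * (1 + lam) + lam * (0 + 1)) * δ0 * δ) lam := by
        exact (((hasDerivAt_id lam).mul ((hasDerivAt_const lam (1:ℝ)).add
          (hasDerivAt_id lam))).mul_const δ0).mul_const δ
      convert this using 1; ring
    exact h1.add h2
  have := hN.div hD (ne_of_gt hQ)
  refine this.congr_deriv ?_
  have h2 : Qden δ0 δ lam x ≠ 0 := ne_of_gt hQ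
  unfold Qden at h2 ⊢
  field_simp
  ring

theorem stmt_10 (x δ0 δ : ℝ) (hx : 0 < x) (hδ0 : 0 < δ0) (hδ : 0 < δ) :
    StrictAntiOn (fun lam => phi δ0 δ lam x) (Set.Ioi 0) ∧
    (∀ lam : ℝ, 0 < lam →
      HasDerivAt (fun t => phi δ0 δ t x)
        (-(2 * (δ0^2 + 2 * δ0 * δ + 2 * δ^2) * x^3 +
            2 * δ0 * δ * (δ0 + 2 * δ) * (1 + lam) * x^2 +
            δ0^2 * δ^2 * (1 + lam)^2 * x) / (Qden δ0 δ lam x)^2) lam ∧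
      -(2 * (δ0^2 + 2 * δ0 * δ + 2 * δ^2) * x^3 +
          2 * δ0 * δ * (δ0 + 2 * δ) * (1 + lam) * x^2 +
          δ0^2 * δ^2 * (1 + lam)^2 * x) / (Qden δ0 δ lam x)^2 < 0) := by
  have hneg : ∀ lam : ℝ, 0 < lam →
      -(2 * (δ0^2 + 2 * δ0 * δ + 2 * δ^2) * x^3 +
          2 * δ0 * δ * (δ0 + 2 * δ) * (1 + lam) * x^2 +
          δ0^2 * δ^2 * (1 + lam)^2 * x) / (Qden δ0 δ lam x)^2 < 0 := by
    intro lam hl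
    have hQ := Qden_pos x δ0 δ lam hx hδ0 hδ hl
    apply div_neg_of_neg_of_pos
    · have h1 : (0:ℝ) < 2 * (δ0^2 + 2 * δ0 * δ + 2 * δ^2) * x^3 := by positivity
      have h2 : (0:ℝ) < 2 * δ0 * δ * (δ0 + 2 * δ) * (1 + lam) * x^2 := by positivity
      have h3 : (0:ℝ) < δ0^2 * δ^2 * (1 + lam)^2 * x := by positivity
      linarith
    · positivity
  refine ⟨?_, fun lam hl => ⟨phi_hasDerivAt x δ0 δ lam hx hδ0 hδ hl, hneg lam hl⟩⟩
  have hint : interior (Set.Ioi (0:ℝ)) = Set.Ioi 0 := interior_Ioi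
  apply strictAntiOn_of_deriv_neg (convex_Ioi 0)
  · intro lam hl
    exact (phi_hasDerivAt x δ0 δ lam hx hδ0 hδ hl).differentiableAt.continuousAt.continuousWithinAt
  · intro lam hl
    rw [hint] at hl
    rw [(phi_hasDerivAt x δ0 δ lam hx hδ0 hδ hl).deriv]
    exact hneg lam hl
end

section
/- Let δ0, δ1, δ2 > 0, λ1, λ2 > 0 with λ1·λ2 < 1, and let (θ1*, θ2*) ∈ (0,∞)² be the unique pair satisfying θ1* = φ1(θ2*) and θ2* = φ2(θ1*). Then the derivatives of φ1 and φ2 satisfy φ1'(θ2*) · φ2'(θ1*) < 1. -/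
lemma phi_key (δ0 δ lam x : ℝ) (h0 : 0 < δ0) (h : 0 < δ) (hl : 0 < lam) (hx : 0 < x) :
    0 < deriv (phi δ0 δ lam) x ∧ deriv (phi δ0 δ lam) x * x < phi δ0 δ lam x := by
  set D : ℝ := 2 * x^2 + ((1 + 2 * lam) * δ0 + 2 * lam * δ) * x + lam * (1 + lam) * δ0 * δ
    with hDdef
  have hD : 0 < D := by positivity
  set num : ℝ := (2 * (δ0 + 2 * δ) * x + (1 + lam) * δ0 * δ) * D -
      ((δ0 + 2 * δ) * x^2 + (1 + lam) * δ0 * δ * x) *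
      (4 * x + ((1 + 2 * lam) * δ0 + 2 * lam * δ)) with hnumdef
  have hN : HasDerivAt (fun y : ℝ => (δ0 + 2 * δ) * y^2 + (1 + lam) * δ0 * δ * y)
      (2 * (δ0 + 2 * δ) * x + (1 + lam) * δ0 * δ) x := by
    have h1 := (hasDerivAt_pow 2 x).const_mul (δ0 + 2 * δ)
    have h2 := (hasDerivAt_id x).const_mul ((1 + lam) * δ0 * δ)
    have := h1.add h2
    refine this.congr_deriv ?_
    push_cast
    ring
  have hDd : HasDerivAt (fun y : ℝ => 2 * y^2 + ((1 + 2 * lam) * δ0 + 2 * lam * δ) * y +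
      lam * (1 + lam) * δ0 * δ) (4 * x + ((1 + 2 * lam) * δ0 + 2 * lam * δ)) x := by
    have h1 := (hasDerivAt_pow 2 x).const_mul (2 : ℝ)
    have h2 := (hasDerivAt_id x).const_mul ((1 + 2 * lam) * δ0 + 2 * lam * δ)
    have := (h1.add h2).add_const (lam * (1 + lam) * δ0 * δ)
    refine this.congr_deriv ?_
    push_cast
    ring
  have hder : HasDerivAt (phi δ0 δ lam) (num / D^2) x := by
    have := hN.div hDd (ne_of_gt hD)
    exact this
  have hderiv : deriv (phi δ0 δ lam) x = num / D^2 := hder.deriv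
  have hnum : num = ((1 + 2 * lam) * δ0^2 + 4 * lam * δ0 * δ + 4 * lam * δ^2) * x^2 +
      2 * (δ0 + 2 * δ) * (lam * (1 + lam) * δ0 * δ) * x +
      (1 + lam) * δ0 * δ * (lam * (1 + lam) * δ0 * δ) := by
    rw [hnumdef, hDdef]; ring
  have hnumpos : 0 < num := by rw [hnum]; positivity
  constructor
  · rw [hderiv]; positivity
  · rw [hderiv]
    have key : phi δ0 δ lam x - (num / D^2) * x =
        x^2 * (2 * (δ0 + 2 * δ) * x^2 + 4 * (1 + lam) * δ0 * δ * x +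
          (1 + lam)^2 * δ0^2 * δ) / D^2 := by
      rw [phi, hnumdef, hDdef]
      field_simp
      ring
    have hpos : 0 < x^2 * (2 * (δ0 + 2 * δ) * x^2 + 4 * (1 + lam) * δ0 * δ * x +
        (1 + lam)^2 * δ0^2 * δ) / D^2 := by positivity
    linarith [key ▸ hpos]

theorem stmt_11 (δ0 δ1 δ2 lam1 lam2 : ℝ) (hδ0 : 0 < δ0) (hδ1 : 0 < δ1) (hδ2 : 0 < δ2)
    (hlam1 : 0 < lam1) (hlam2 : 0 < lam2) (hprod : lam1 * lam2 < 1)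
    (θ1 θ2 : ℝ) (hθ1 : 0 < θ1) (hθ2 : 0 < θ2)
    (hfix1 : θ1 = phi δ0 δ1 lam2 θ2) (hfix2 : θ2 = phi δ0 δ2 lam1 θ1) :
    deriv (phi δ0 δ1 lam2) θ2 * deriv (phi δ0 δ2 lam1) θ1 < 1 := by
  obtain ⟨h1pos, h1lt⟩ := phi_key δ0 δ1 lam2 θ2 hδ0 hδ1 hlam2 hθ2
  obtain ⟨h2pos, h2lt⟩ := phi_key δ0 δ2 lam1 θ1 hδ0 hδ2 hlam1 hθ1
  rw [← hfix1] at h1lt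
  rw [← hfix2] at h2lt
  have hb1 : deriv (phi δ0 δ1 lam2) θ2 < θ1 / θ2 := (lt_div_iff₀ hθ2).2 h1lt
  have hb2 : deriv (phi δ0 δ2 lam1) θ1 < θ2 / θ1 := (lt_div_iff₀ hθ1).2 h2lt
  have := mul_lt_mul'' hb1 hb2 (le_of_lt h1pos) (le_of_lt h2pos)
  calc deriv (phi δ0 δ1 lam2) θ2 * deriv (phi δ0 δ2 lam1) θ1
      < (θ1 / θ2) * (θ2 / θ1) := this
    _ = 1 := by field_simp
end

section
/- Let δ0, δ1, δ2 > 0 and λ1 > 0 be fixed. For each λ2 with 0 < λ2 < 1/λ1, let (θ1*(λ2), θ2*(λ2)) ∈ (0,∞)² denote the unique equilibrium premium pair for the parameters (δ0, δ1, δ2, λ1, λ2). Then θ1*(λ2) → 0 and θ2*(λ2) → 0 as λ2 → 1/λ1 from below; that is, for every ε > 0 there exists η > 0 such that for all λ2 with 1/λ1 − η < λ2 < 1/λ1, both θ1*(λ2) < ε and θ2*(λ2) < ε. -/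
lemma phi_key_s14 (δ0 δ lam x : ℝ) (hδ0 : 0 < δ0) (hδ : 0 < δ) (hlam : 0 < lam) (hx : 0 < x) :
    lam * phi δ0 δ lam x *
        (2 * x^2 + ((1 + 2 * lam) * δ0 + 2 * lam * δ) * x + lam * (1 + lam) * δ0 * δ)
      = x * (2 * x^2 + ((1 + 2 * lam) * δ0 + 2 * lam * δ) * x + lam * (1 + lam) * δ0 * δ)
        - x^2 * (2 * x + (1 + lam) * δ0) := by
  have hD : (2 * x^2 + ((1 + 2 * lam) * δ0 + 2 * lam * δ) * x + lam * (1 + lam) * δ0 * δ) ≠ 0 := by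
    positivity
  rw [phi]
  field_simp
  ring


lemma small_aux (s K ε x Bx Cx : ℝ) (hε : 0 < ε) (hs0 : 0 < s) (hsK : s * K < ε)
    (hx : 0 < x) (hCx : 0 < Cx) (hKle : Bx + Cx / ε ≤ K)
    (hq : x^2 ≤ s * (Bx * x + Cx)) : x < ε := by
  by_contra hxe
  push_neg at hxe
  have h1 : Cx ≤ Cx * x / ε := by
    rw [le_div_iff₀ hε]
    have := mul_le_mul_of_nonneg_left hxe hCx.le
    linarith
  have hBxle : Bx * x + Cx ≤ (Bx + Cx / ε) * x := by
    have : (Bx + Cx / ε) * x = Bx * x + Cx * x / ε := by ring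
    linarith
  have h2 : x^2 ≤ s * ((Bx + Cx / ε) * x) :=
    hq.trans (mul_le_mul_of_nonneg_left hBxle hs0.le)
  have h3 : s * (Bx + Cx / ε) ≤ s * K := mul_le_mul_of_nonneg_left hKle hs0.le
  have c1 : s * ((Bx + Cx / ε) * x) ≤ (s * K) * x := by
    have := mul_le_mul_of_nonneg_right h3 hx.le
    linarith
  have c2 : (s * K) * x < ε * x := mul_lt_mul_of_pos_right hsK hx
  have c3 : ε * x ≤ x * x := mul_le_mul_of_nonneg_right hxe hx.le
  linarith [h2, c1, c2, c3]

set_option maxHeartbeats 1600000 in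
theorem stmt_14 (δ0 δ1 δ2 lam1 : ℝ) (hδ0 : 0 < δ0) (hδ1 : 0 < δ1) (hδ2 : 0 < δ2)
    (hlam1 : 0 < lam1) (θ1s θ2s : ℝ → ℝ)
    (heq : ∀ lam2 : ℝ, 0 < lam2 → lam2 < 1 / lam1 →
      0 < θ1s lam2 ∧ 0 < θ2s lam2 ∧
      θ1s lam2 = phi δ0 δ1 lam2 (θ2s lam2) ∧ θ2s lam2 = phi δ0 δ2 lam1 (θ1s lam2)) :
    ∀ ε : ℝ, 0 < ε → ∃ η : ℝ, 0 < η ∧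
      ∀ lam2 : ℝ, 0 < lam2 → 1 / lam1 - η < lam2 → lam2 < 1 / lam1 →
        θ1s lam2 < ε ∧ θ2s lam2 < ε := by
  intro ε hε
  set L : ℝ := 1 / lam1 with hLdef
  have hL : 0 < L := by positivity
  set B1 : ℝ := (1 + 2 * lam1) * δ0 + 2 * lam1 * δ2 with hB1def
  set C1 : ℝ := lam1 * (1 + lam1) * δ0 * δ2 with hC1def
  set B2 : ℝ := (1 + 2 * L) * δ0 + 2 * L * δ1 with hB2def
  set C2 : ℝ := L * (1 + L) * δ0 * δ1 with hC2def
  have hB1 : 0 < B1 := by positivity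
  have hC1 : 0 < C1 := by positivity
  have hB2 : 0 < B2 := by positivity
  have hC2 : 0 < C2 := by positivity
  set K : ℝ := B1 + C1 / ε + B2 + C2 / ε + 1 with hKdef
  have hK : 0 < K := by positivity
  refine ⟨min (ε / (lam1 * K)) (1 / (2 * lam1)), by positivity, ?_⟩
  intro lam2 hl2 hlo hhi
  obtain ⟨ha, hb, he1, he2⟩ := heq lam2 hl2 hhi
  set a : ℝ := θ1s lam2
  set b : ℝ := θ2s lam2
  set s : ℝ := 1 - lam1 * lam2 with hsdef
  have hone : lam1 * L = 1 := by
    rw [hLdef]; field_simp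
  have hs0 : 0 < s := by
    have h := mul_lt_mul_of_pos_left hhi hlam1
    rw [hone] at h
    simp only [hsdef]; linarith
  have hsmall : s < lam1 * min (ε / (lam1 * K)) (1 / (2 * lam1)) := by
    have h : lam1 * (L - min (ε / (lam1 * K)) (1 / (2 * lam1))) < lam1 * lam2 :=
      mul_lt_mul_of_pos_left hlo hlam1
    rw [mul_sub, hone] at h
    simp only [hsdef]; linarith
  have hs2 : s ≤ 1 / 2 := by
    have h1 : lam1 * min (ε / (lam1 * K)) (1 / (2 * lam1)) ≤ lam1 * (1 / (2 * lam1)) :=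
      mul_le_mul_of_nonneg_left (min_le_right _ _) hlam1.le
    have h2 : lam1 * (1 / (2 * lam1)) = 1 / 2 := by field_simp
    linarith
  have hsK : s * K < ε := by
    have h1 : lam1 * min (ε / (lam1 * K)) (1 / (2 * lam1)) ≤ lam1 * (ε / (lam1 * K)) :=
      mul_le_mul_of_nonneg_left (min_le_left _ _) hlam1.le
    have h2 : lam1 * (ε / (lam1 * K)) = ε / K := by field_simp
    have h3 : s < ε / K := by linarith
    calc s * K < (ε / K) * K := mul_lt_mul_of_pos_right h3 hK
    _ = ε := by field_simp
  -- denominators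
  set D1 : ℝ := 2 * a^2 + B1 * a + C1 with hD1def
  set D2 : ℝ := 2 * b^2 + ((1 + 2 * lam2) * δ0 + 2 * lam2 * δ1) * b
      + lam2 * (1 + lam2) * δ0 * δ1 with hD2def
  have hD1 : 0 < D1 := by positivity
  have hD2 : 0 < D2 := by positivity
  -- key identities
  have key1 : lam2 * a * D2 = b * D2 - b^2 * (2 * b + (1 + lam2) * δ0) := by
    rw [he1]
    exact phi_key_s14 δ0 δ1 lam2 b hδ0 hδ1 hl2 hb
  have key2 : lam1 * b * D1 = a * D1 - a^2 * (2 * a + (1 + lam1) * δ0) := by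
    rw [he2]
    simpa only [hD1def, hB1def, hC1def] using phi_key_s14 δ0 δ2 lam1 a hδ0 hδ2 hlam1 ha
  -- lam2 * a ≤ b  and  lam1 * b ≤ a
  have hab : lam2 * a ≤ b := by
    have hpos : 0 ≤ b^2 * (2 * b + (1 + lam2) * δ0) := by positivity
    have h : lam2 * a * D2 ≤ b * D2 := by linarith
    exact le_of_mul_le_mul_right h hD2
  have hba : lam1 * b ≤ a := by
    have hpos : 0 ≤ a^2 * (2 * a + (1 + lam1) * δ0) := by positivity
    have h : lam1 * b * D1 ≤ a * D1 := by linarith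
    exact le_of_mul_le_mul_right h hD1
  -- quadratic bound for a
  have qa : a^2 ≤ s * (B1 * a + C1) := by
    have h1 : lam1 * lam2 * a * D1 ≤ lam1 * b * D1 := by
      have h := mul_le_mul_of_nonneg_right
        (mul_le_mul_of_nonneg_left hab hlam1.le) hD1.le
      linarith
    have e : a^2 * (2 * a + (1 + lam1) * δ0) = a * D1 - lam1 * b * D1 := by linarith
    have e2 : s * (a * D1) = a * D1 - lam1 * lam2 * (a * D1) := by
      simp only [hsdef]; ring
    have h2 : a^2 * (2 * a + (1 + lam1) * δ0) ≤ s * (a * D1) := by linarith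
    have h3 : a * (2 * a + (1 + lam1) * δ0) ≤ s * D1 := by
      have h2' : a * (a * (2 * a + (1 + lam1) * δ0)) ≤ a * (s * D1) := by linarith
      exact le_of_mul_le_mul_left h2' ha
    simp only [hD1def] at h3
    have hint1 : 0 ≤ (1 - 2 * s) * a^2 :=
      mul_nonneg (by linarith : (0:ℝ) ≤ 1 - 2 * s) (sq_nonneg a)
    have hint2 : 0 ≤ (1 + lam1) * δ0 * a := by positivity
    linarith
  -- quadratic bound for b
  have qb : b^2 ≤ s * (B2 * b + C2) := by
    have h1 : lam1 * lam2 * b * D2 ≤ lam2 * a * D2 := by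
      have h := mul_le_mul_of_nonneg_right
        (mul_le_mul_of_nonneg_left hba hl2.le) hD2.le
      linarith
    have e : b^2 * (2 * b + (1 + lam2) * δ0) = b * D2 - lam2 * a * D2 := by linarith
    have e2 : s * (b * D2) = b * D2 - lam1 * lam2 * (b * D2) := by
      simp only [hsdef]; ring
    have h2 : b^2 * (2 * b + (1 + lam2) * δ0) ≤ s * (b * D2) := by linarith
    have h3 : b * (2 * b + (1 + lam2) * δ0) ≤ s * D2 := by
      have h2' : b * (b * (2 * b + (1 + lam2) * δ0)) ≤ b * (s * D2) := by linarith
      exact le_of_mul_le_mul_left h2' hb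
    have hlam2L : lam2 ≤ L := hhi.le
    have hDb : D2 ≤ 2 * b^2 + B2 * b + C2 := by
      simp only [hD2def, hB2def, hC2def]
      have k1 : 0 ≤ (L - lam2) * δ0 * b := by
        have := sub_nonneg.2 hlam2L; positivity
      have k2 : 0 ≤ (L - lam2) * δ1 * b := by
        have := sub_nonneg.2 hlam2L; positivity
      have k3 : 0 ≤ (L - lam2) * (1 + L + lam2) * δ0 * δ1 := by
        have := sub_nonneg.2 hlam2L
        have h4 : (0:ℝ) ≤ 1 + L + lam2 := by positivity
        positivity
      linarith [k1, k2, k3]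
    have h4 : b * (2 * b + (1 + lam2) * δ0) ≤ s * (2 * b^2 + B2 * b + C2) := by
      have := mul_le_mul_of_nonneg_left hDb hs0.le
      linarith
    have hint1 : 0 ≤ (1 - 2 * s) * b^2 :=
      mul_nonneg (by linarith : (0:ℝ) ≤ 1 - 2 * s) (sq_nonneg b)
    have hint2 : 0 ≤ (1 + lam2) * δ0 * b := by positivity
    linarith
  have hKa : B1 + C1 / ε ≤ K := by
    have : 0 < B2 + C2 / ε + 1 := by positivity
    simp only [hKdef]; linarith
  have hKb : B2 + C2 / ε ≤ K := by
    have : 0 < B1 + C1 / ε + 1 := by positivity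
    simp only [hKdef]; linarith
  exact ⟨small_aux s K ε a B1 C1 hε hs0 hsK ha hC1 hKa qa,
    small_aux s K ε b B2 C2 hε hs0 hsK hb hC2 hKb qb⟩
end

section
/- Let δ0, δ1, δ2 > 0 and λ2 > 0 (the case λ1 = 0, λ2 > 0). Define φ1(x) = ((δ0 + 2δ1)·x² + (1+λ2)·δ0·δ1·x)/(2x² + ((1+2λ2)·δ0 + 2λ2·δ1)·x + λ2·(1+λ2)·δ0·δ1) and ψ2(x) = ((δ0 + 2δ2)·x + δ0·δ2)/(2x + δ0) for x > 0. Then there exists exactly one pair (θ1*, θ2*) with θ1* > 0 and θ2* > 0 such that θ1* = φ1(θ2*) and θ2* = ψ2(θ1*); moreover, δ2 < θ2* < δ2 + δ0/2. -/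
/-- The reinsurer's best-response function in the no-competition case (λ = 0). -/
noncomputable def psi (δ0 δ x : ℝ) : ℝ := ((δ0 + 2 * δ) * x + δ0 * δ) / (2 * x + δ0)

lemma psi_bounds (a c t : ℝ) (ha : 0 < a) (hc : 0 < c) (ht : 0 < t) :
    c < psi a c t ∧ psi a c t < c + a / 2 := by
  have hd : (0:ℝ) < 2 * t + a := by linarith
  unfold psi
  constructor
  · rw [lt_div_iff₀ hd]; nlinarith
  · rw [div_lt_iff₀ hd]; nlinarith

lemma coeff_imp (a b c l : ℝ) (ha : 0 < a) (hb : 0 < b) (hc : 0 < c) (hl : 0 < l)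
    (h : 0 < a * ((l^2 - 1) * a * b - (1 + 2*l) * a * c - (4*l + 2) * b * c)) :
    0 ≤ 2*l*a^2 + 4*l*a*b - 4*a*c - 4*b*c := by
  have h' : (2*l + 1) * (a + 2*b) * c < (l^2 - 1) * a * b := by nlinarith
  have f1 : 2*(a+b)*((2*l + 1) * (a + 2*b) * c) < 2*(a+b)*((l^2 - 1) * a * b) :=
    mul_lt_mul_of_pos_left h' (by positivity)
  have h2 : (0:ℝ) < (2*l+1)*(a+2*b) := by positivity
  have p1 : (0:ℝ) ≤ l*(2*l+1)*a^3 + (6*l^2+4*l+2)*(a^2*b) + (6*l^2+4*l+2)*(a*b^2) := by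
    positivity
  nlinarith [f1, h2, p1]

lemma cubic_lt_ne (c3 c2 c1 c0 x y : ℝ) (h3 : 0 < c3) (h0 : c0 < 0)
    (himp : 0 < c1 → 0 ≤ c2) (hx : 0 < x) (hy : 0 < y) (hxy : x < y)
    (ex : c3*x^3 + c2*x^2 + c1*x + c0 = 0)
    (ey : c3*y^3 + c2*y^2 + c1*y + c0 = 0) : False := by
  rcases le_or_gt c1 0 with hc1 | hc1
  · have key : (y - x) * (c3*(x*y)^2 - c1*(x*y) - c0*(x+y)) = 0 := by
      linear_combination x^2 * ey - y^2 * ex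
    have hpos : 0 < c3*(x*y)^2 - c1*(x*y) - c0*(x+y) := by
      have hxyp := mul_pos hx hy
      nlinarith [mul_pos h3 (mul_pos hxyp hxyp), mul_nonneg (neg_nonneg.mpr hc1) hxyp.le,
        mul_pos (neg_pos.mpr h0) (by linarith : (0:ℝ) < x + y)]
    rcases mul_eq_zero.mp key with h | h
    · linarith
    · linarith
  · have hc2 := himp hc1
    have key : (y - x) * (c3*(x*y)*(x+y) + c2*(x*y) - c0) = 0 := by
      linear_combination x * ey - y * ex
    have hpos : 0 < c3*(x*y)*(x+y) + c2*(x*y) - c0 := by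
      have hxyp := mul_pos hx hy
      nlinarith [mul_pos (mul_pos h3 hxyp) (by linarith : (0:ℝ) < x + y),
        mul_nonneg hc2 hxyp.le]
    rcases mul_eq_zero.mp key with h | h
    · linarith
    · linarith

theorem stmt_18 (δ0 δ1 δ2 lam2 : ℝ) (hδ0 : 0 < δ0) (hδ1 : 0 < δ1) (hδ2 : 0 < δ2)
    (hlam2 : 0 < lam2) :
    (∃! θ : ℝ × ℝ, 0 < θ.1 ∧ 0 < θ.2 ∧
      θ.1 = phi δ0 δ1 lam2 θ.2 ∧ θ.2 = psi δ0 δ2 θ.1) ∧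
    (∀ θ1 θ2 : ℝ, 0 < θ1 → 0 < θ2 → θ1 = phi δ0 δ1 lam2 θ2 → θ2 = psi δ0 δ2 θ1 →
      δ2 < θ2 ∧ θ2 < δ2 + δ0 / 2) := by
  -- the resolvent cubic
  set H : ℝ → ℝ := fun x =>
    δ0 * (x - δ2) * (2*x^2 + ((1 + 2*lam2)*δ0 + 2*lam2*δ1)*x + lam2*(1+lam2)*δ0*δ1)
      - ((δ0 + 2*δ1)*x^2 + (1+lam2)*δ0*δ1*x) * (δ0 + 2*δ2 - 2*x) with hHdef
  have hD : ∀ x : ℝ, 0 < x →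
      0 < 2*x^2 + ((1 + 2*lam2)*δ0 + 2*lam2*δ1)*x + lam2*(1+lam2)*δ0*δ1 := by
    intro x hx
    nlinarith [sq_nonneg x, mul_pos (show (0:ℝ) < (1 + 2*lam2)*δ0 + 2*lam2*δ1 by positivity) hx,
      mul_pos (mul_pos hlam2 (show (0:ℝ) < 1 + lam2 by linarith)) (mul_pos hδ0 hδ1)]
  have himp : 0 < δ0 * ((lam2^2 - 1) * δ0 * δ1 - (1 + 2*lam2) * δ0 * δ2
      - (4*lam2 + 2) * δ1 * δ2) →
      0 ≤ 2*lam2*δ0^2 + 4*lam2*δ0*δ1 - 4*δ0*δ2 - 4*δ1*δ2 :=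
    coeff_imp δ0 δ1 δ2 lam2 hδ0 hδ1 hδ2 hlam2
  have hc3 : (0:ℝ) < 4*δ0 + 4*δ1 := by linarith
  have hc0 : -(δ0^2 * δ2 * lam2 * (1 + lam2) * δ1) < 0 := by
    have : 0 < δ0^2 * δ2 * lam2 * (1 + lam2) * δ1 := by positivity
    linarith
  -- uniqueness of roots of H in (0, ∞)
  have hroot_unique : ∀ x y : ℝ, 0 < x → 0 < y → H x = 0 → H y = 0 → x = y := by
    intro x y hx hy ex ey
    by_contra hne
    rcases lt_or_gt_of_ne hne with h | h
    · exact cubic_lt_ne (4*δ0 + 4*δ1) (2*lam2*δ0^2 + 4*lam2*δ0*δ1 - 4*δ0*δ2 - 4*δ1*δ2)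
        (δ0 * ((lam2^2 - 1) * δ0 * δ1 - (1 + 2*lam2) * δ0 * δ2 - (4*lam2 + 2) * δ1 * δ2))
        (-(δ0^2 * δ2 * lam2 * (1 + lam2) * δ1)) x y hc3 hc0 himp hx hy h
        (by simp only [hHdef] at ex; linear_combination ex)
        (by simp only [hHdef] at ey; linear_combination ey)
    · exact cubic_lt_ne (4*δ0 + 4*δ1) (2*lam2*δ0^2 + 4*lam2*δ0*δ1 - 4*δ0*δ2 - 4*δ1*δ2)
        (δ0 * ((lam2^2 - 1) * δ0 * δ1 - (1 + 2*lam2) * δ0 * δ2 - (4*lam2 + 2) * δ1 * δ2))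
        (-(δ0^2 * δ2 * lam2 * (1 + lam2) * δ1)) y x hc3 hc0 himp hy hx h
        (by simp only [hHdef] at ey; linear_combination ey)
        (by simp only [hHdef] at ex; linear_combination ex)
  -- existence of a root of H in (δ2, δ2 + δ0/2)
  have hHa : H δ2 < 0 := by
    simp only [hHdef]
    nlinarith [mul_pos hδ0 hδ1, sq_nonneg δ2, mul_pos hδ2 hδ2, mul_pos (mul_pos hδ0 hδ1) hδ2,
      mul_pos (mul_pos hδ0 hδ0) hδ1, mul_pos (mul_pos (mul_pos hδ0 hδ1) hδ2) hlam2]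
  have hHb : 0 < H (δ2 + δ0/2) := by
    have := hD (δ2 + δ0/2) (by linarith)
    simp only [hHdef]
    nlinarith [mul_pos (mul_pos hδ0 (show (0:ℝ) < δ0/2 by linarith)) this]
  obtain ⟨x, hxmem, hHx⟩ : ∃ x ∈ Set.Ioo δ2 (δ2 + δ0/2), H x = 0 := by
    have hcont : ContinuousOn H (Set.Icc δ2 (δ2 + δ0/2)) := by
      apply Continuous.continuousOn; simp only [hHdef]; fun_prop
    have hsub := intermediate_value_Ioo (by linarith : δ2 ≤ δ2 + δ0/2) hcont
    have h0 : (0:ℝ) ∈ Set.Ioo (H δ2) (H (δ2 + δ0/2)) := ⟨hHa, hHb⟩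
    obtain ⟨x, hx, hx0⟩ := hsub h0
    exact ⟨x, hx, hx0⟩
  obtain ⟨hx1, hx2⟩ := hxmem
  have hxpos : 0 < x := lt_trans hδ2 hx1
  have hg : 0 < δ0 + 2*δ2 - 2*x := by linarith
  set t1 : ℝ := δ0 * (x - δ2) / (δ0 + 2*δ2 - 2*x) with ht1def
  have ht1pos : 0 < t1 := by
    apply div_pos _ hg; nlinarith
  have hDx := hD x hxpos
  have ht1phi : t1 = phi δ0 δ1 lam2 x := by
    rw [ht1def, phi, div_eq_div_iff hg.ne' hDx.ne']
    simp only [hHdef] at hHx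
    linear_combination hHx
  have hxpsi : x = psi δ0 δ2 t1 := by
    have h2t : (0:ℝ) < 2 * t1 + δ0 := by linarith
    rw [psi, eq_div_iff h2t.ne', ht1def]
    have hq : δ0 * (x - δ2) / (δ0 + 2*δ2 - 2*x) * (δ0 + 2*δ2 - 2*x) = δ0 * (x - δ2) :=
      div_mul_cancel₀ _ hg.ne'
    linear_combination -hq
  -- characterization: any solution gives a root of H
  have hchar : ∀ u1 u2 : ℝ, 0 < u1 → 0 < u2 → u1 = phi δ0 δ1 lam2 u2 →
      u2 = psi δ0 δ2 u1 → H u2 = 0 ∧ δ2 < u2 ∧ u2 < δ2 + δ0/2 ∧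
        u1 * (δ0 + 2*δ2 - 2*u2) = δ0 * (u2 - δ2) := by
    intro u1 u2 hu1 hu2 e1 e2
    have hbd := psi_bounds δ0 δ2 u1 hδ0 hδ2 hu1
    rw [← e2] at hbd
    have h2u : (0:ℝ) < 2 * u1 + δ0 := by linarith
    have e2' : u2 * (2 * u1 + δ0) = (δ0 + 2*δ2) * u1 + δ0 * δ2 := by
      rw [e2, psi, div_mul_cancel₀ _ h2u.ne']
    have e2'' : u1 * (δ0 + 2*δ2 - 2*u2) = δ0 * (u2 - δ2) := by linear_combination -e2'
    have hDu := hD u2 hu2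
    have e1' : u1 * (2*u2^2 + ((1 + 2*lam2)*δ0 + 2*lam2*δ1)*u2 + lam2*(1+lam2)*δ0*δ1)
        = (δ0 + 2*δ1)*u2^2 + (1+lam2)*δ0*δ1*u2 := by
      rw [e1, phi, div_mul_cancel₀ _ hDu.ne']
    refine ⟨?_, hbd.1, hbd.2, e2''⟩
    simp only [hHdef]
    linear_combination
      (-(2*u2^2 + ((1 + 2*lam2)*δ0 + 2*lam2*δ1)*u2 + lam2*(1+lam2)*δ0*δ1)) * e2''
        + (δ0 + 2*δ2 - 2*u2) * e1'
  constructor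
  · refine ⟨(t1, x), ⟨ht1pos, hxpos, ht1phi, hxpsi⟩, ?_⟩
    rintro ⟨u1, u2⟩ ⟨hu1, hu2, e1, e2⟩
    obtain ⟨hHu2, _, hub, e2''⟩ := hchar u1 u2 hu1 hu2 e1 e2
    have hu2x : u2 = x := hroot_unique u2 x hu2 hxpos hHu2 hHx
    have hu1t : u1 = t1 := by
      rw [ht1def, eq_div_iff (by rw [← hu2x] at hg ⊢; exact hg.ne'), ← hu2x]
      exact e2''
    simp [hu1t, hu2x]
  · intro θ1 θ2 h1 h2 e1 e2
    have hbd := psi_bounds δ0 δ2 θ1 hδ0 hδ2 h1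
    rw [← e2] at hbd
    exact hbd
end
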